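/- Let α ≥ 3 be an integer, R_c the unique positive solution of (R − 1)·g_α(R) = R^α/(α−1)!, and β_c = R_c/g_α(R_c). Then the radius of convergence of the real power series Σ_{n≥2} r_α(n)·x^{n−1} equals exactly β_c; that is, the grand-canonical partition function of rooted branched polymers with coordination numbers at most α converges precisely for |x| < β_c and its critical fugacity is β_c = R_c/g_α(R_c). -/

import Mathlib

/-!
Write `P = ∑_{γ<α} X^γ/γ!`, so that `g_α(R) = P(R)` and `r_α(k+2) = [X^k] P^{k+1} / (k+1)`.
Since `P` has nonnegative coefficients, `[X^k] P^{k+1} · R^k ≤ P(R)^{k+1}` for every `R > 0`,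
which bounds the series by a geometric one when `|x| < R_c / g_α(R_c)`.

Conversely, the equation for `R_c` says exactly `R_c P'(R_c) = P(R_c)`: the weights
`t_m = [X^m] P^N · R_c^m`, of total mass `P(R_c)^N`, have mean `N`. They form a Pólya frequency
sequence of order 2, being the `N`-fold convolution of one, and such a distribution on
`{0, …, M}` with integer mean `N` puts mass at least `(M + 1)^{-4}` on `N` (Markov's inequality
on either side of `N` finds heavy points `a ≤ N ≤ b`, and `t_a t_b ≤ t_N t_{a+b-N}`). So
`[X^N] P^N ≥ (g_α(R_c)/R_c)^N / poly(N)`, and the terms of the series do not tend to zero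
when `|x| > R_c / g_α(R_c)`.
-/

open Finset

/-- The truncated exponential `g_α(R) = Σ_{γ=0}^{α−1} R^γ/γ!`. -/
noncomputable def truncExp (α : ℕ) (R : ℝ) : ℝ :=
  ∑ γ ∈ Finset.range α, R ^ γ / (Nat.factorial γ)

/-- The number `r_α(n)` of combinatorially inequivalent rooted tree graphs with
`n` vertices, root of coordination number 1, and all coordination numbers at
most `α`, given by the paper's closed (Cayley-type) formula. -/
noncomputable def rootedTrees (α n : ℕ) : ℝ :=
  (1 / (n - 1 : ℝ)) *
    ∑ f ∈ (Fintype.piFinset fun _ : Fin (n - 1) => Finset.range α) |>.filter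
        (fun f => ∑ i, f i = n - 2),
      ∏ i, (1 : ℝ) / (Nat.factorial (f i))

open Polynomial

/-- Pólya frequency of order 2: for a nonnegative sequence this says it is log-concave
without internal zeros. -/
def IsPF2 (u : ℤ → ℝ) : Prop :=
  ∀ x y : ℤ, x ≤ y → u x * u (y + 1) ≤ u (x + 1) * u y

theorem IsPF2.mul_le_mul {u : ℤ → ℝ} (hu : IsPF2 u) {i j k : ℤ} (hij : i ≤ j) (hk : 0 ≤ k) :
    u i * u (j + k) ≤ u j * u (i + k) := by
  obtain ⟨d, rfl⟩ : ∃ d : ℕ, j = i + d := ⟨(j - i).toNat, by omega⟩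
  lift k to ℕ using hk
  clear hij
  induction d generalizing i k with
  | zero => simp
  | succ d ih =>
    cases k with
    | zero => simp [mul_comm]
    | succ k =>
      calc u i * u (i + ↑(d + 1) + ↑(k + 1)) = u i * u (i + d + k + 1 + 1) := by push_cast; ring_nf
        _ ≤ u (i + 1) * u (i + d + k + 1) := hu i _ (by omega)
        _ = u (i + 1) * u (i + 1 + d + k) := by ring_nf
        _ ≤ u (i + 1 + d) * u (i + 1 + k) := ih k
        _ = u (i + ↑(d + 1)) * u (i + ↑(k + 1)) := by push_cast; ring_nf

theorem Finset.sum_sum_nonneg_of_add_swap_nonneg {ι : Type*} {s : Finset ι} {F : ι → ι → ℝ}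
    (h : ∀ i ∈ s, ∀ j ∈ s, 0 ≤ F i j + F j i) : 0 ≤ ∑ i ∈ s, ∑ j ∈ s, F i j := by
  have : 2 * ∑ i ∈ s, ∑ j ∈ s, F i j = ∑ i ∈ s, ∑ j ∈ s, (F i j + F j i) := by
    simp only [sum_add_distrib, two_mul]
    rw [sum_comm (f := fun i j => F j i)]
  have := sum_nonneg fun i hi => sum_nonneg fun j hj => h i hi j hj
  linarith

namespace Polynomial

def intCoeff (p : ℝ[X]) (z : ℤ) : ℝ := if z < 0 then 0 else p.coeff z.toNat

@[simp] theorem intCoeff_natCast (p : ℝ[X]) (n : ℕ) : p.intCoeff n = p.coeff n := by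
  simp [intCoeff]

theorem intCoeff_of_neg (p : ℝ[X]) {z : ℤ} (hz : z < 0) : p.intCoeff z = 0 := if_pos hz

theorem intCoeff_nonneg {p : ℝ[X]} (hp : ∀ n, 0 ≤ p.coeff n) (z : ℤ) :
    0 ≤ p.intCoeff z := by
  unfold intCoeff
  split
  · exact le_rfl
  · exact hp _

theorem intCoeff_mul (p q : ℝ[X]) {a b m : ℤ} (ha : a ≤ 0) (hb : m ≤ b) :
    (p * q).intCoeff m = ∑ j ∈ Icc a b, p.intCoeff j * q.intCoeff (m - j) := by
  have hvanish : ∀ j, (j < 0 ∨ m < j) → p.intCoeff j * q.intCoeff (m - j) = 0 := by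
    rintro j (hj | hj)
    · rw [intCoeff_of_neg p hj, zero_mul]
    · rw [intCoeff_of_neg q (by omega), mul_zero]
  rcases lt_or_ge m 0 with hm | hm
  · rw [intCoeff_of_neg _ hm, sum_eq_zero fun j _ => hvanish j (by omega)]
  lift m to ℕ using hm
  have hsub : (range (m + 1)).map Nat.castEmbedding ⊆ Icc a b := by
    intro j hj
    simp only [mem_map, mem_range, Nat.castEmbedding_apply] at hj
    obtain ⟨k, hk, rfl⟩ := hj
    simp only [mem_Icc]
    omega
  rw [← sum_subset hsub fun j _ hj => hvanish j ?_, sum_map, intCoeff_natCast, coeff_mul,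
    Nat.sum_antidiagonal_eq_sum_range_succ_mk]
  · refine sum_congr rfl fun k hk => ?_
    rw [mem_range] at hk
    simp [← Nat.cast_sub (Nat.lt_succ_iff.mp hk)]
  · simp only [mem_map, mem_range, Nat.castEmbedding_apply, not_exists, not_and] at hj
    by_contra! hc
    exact hj j.toNat (by omega) (by omega)

theorem intCoeff_mul_add_one (p q : ℝ[X]) {a b m : ℤ} (ha : a ≤ -1) (hb : m ≤ b) :
    (p * q).intCoeff (m + 1) = ∑ j ∈ Icc a b, p.intCoeff (j + 1) * q.intCoeff (m - j) := by
  rw [intCoeff_mul p q (a := a + 1) (b := b + 1) (by omega) (by omega), ← map_add_right_Icc,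
    sum_map]
  refine sum_congr rfl fun j _ => ?_
  simp only [addRightEmbedding_apply]
  ring_nf

end Polynomial

theorem IsPF2.intCoeff_mul {p q : ℝ[X]} (hp : IsPF2 p.intCoeff) (hq : IsPF2 q.intCoeff) :
    IsPF2 (p * q).intCoeff := by
  intro x y hxy
  set u := p.intCoeff
  set w := q.intCoeff
  set J := Icc (-1 : ℤ) (y + 1)
  have expand : (p * q).intCoeff (x + 1) * (p * q).intCoeff y
      - (p * q).intCoeff x * (p * q).intCoeff (y + 1)
      = ∑ j ∈ J, ∑ j' ∈ J, w (x - j) * w (y - j') * (u (j + 1) * u j' - u j * u (j' + 1)) := by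
    rw [Polynomial.intCoeff_mul_add_one p q le_rfl (by omega : x ≤ y + 1),
      Polynomial.intCoeff_mul p q (a := -1) (by norm_num) (by omega : y ≤ y + 1),
      Polynomial.intCoeff_mul p q (a := -1) (by norm_num) (by omega : x ≤ y + 1),
      Polynomial.intCoeff_mul_add_one p q le_rfl (by omega : y ≤ y + 1), sum_mul_sum, sum_mul_sum,
      ← sum_sub_distrib]
    refine sum_congr rfl fun j _ => ?_
    rw [← sum_sub_distrib]
    exact sum_congr rfl fun j' _ => by ring
  -- pairing `(j, j')` with `(j', j)` factors the summand into two nonnegative `2 × 2` minors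
  have pair : ∀ j j', j ≤ j' →
      0 ≤ w (x - j) * w (y - j') * (u (j + 1) * u j' - u j * u (j' + 1))
        + w (x - j') * w (y - j) * (u (j' + 1) * u j - u j' * u (j + 1)) := by
    intro j j' hjj'
    have hu := hp j j' hjj'
    have hw : w (x - j') * w (y - j) ≤ w (x - j) * w (y - j') := by
      convert hq.mul_le_mul (i := x - j') (j := x - j) (k := y - x) (by omega) (by omega)
        using 3 <;> ring
    have factor : w (x - j) * w (y - j') * (u (j + 1) * u j' - u j * u (j' + 1))
        + w (x - j') * w (y - j) * (u (j' + 1) * u j - u j' * u (j + 1))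
        = (u (j + 1) * u j' - u j * u (j' + 1)) * (w (x - j) * w (y - j') - w (x - j') * w (y - j))
      := by ring
    rw [factor]
    exact mul_nonneg (sub_nonneg.2 hu) (sub_nonneg.2 hw)
  rw [← sub_nonneg, expand]
  exact sum_sum_nonneg_of_add_swap_nonneg fun j _ j' _ =>
    (le_total j j').elim (pair j j') fun h => (add_comm _ _).trans_ge (pair j' j h)

theorem Polynomial.sum_range_mul_coeff_mul_pow {p : ℝ[X]} {n : ℕ} (hp : p.natDegree < n) (x : ℝ) :
    ∑ i ∈ range n, (i : ℝ) * (p.coeff i * x ^ i) = x * (derivative p).eval x := by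
  have hd : (derivative p).natDegree < n := (natDegree_derivative_le p).trans_lt (by omega)
  calc ∑ i ∈ range n, (i : ℝ) * (p.coeff i * x ^ i)
      = ∑ i ∈ range (n + 1), (i : ℝ) * (p.coeff i * x ^ i) := by
        rw [sum_range_succ, coeff_eq_zero_of_natDegree_lt hp]; simp
    _ = ∑ i ∈ range n, ((i : ℝ) + 1) * (p.coeff (i + 1) * x ^ (i + 1)) := by
        rw [sum_range_succ']; simp
    _ = x * (derivative p).eval x := by
        rw [eval_eq_sum_range' hd, mul_sum]
        exact sum_congr rfl fun i _ => by rw [coeff_derivative]; ring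

theorem Polynomial.coeff_mul_pow_le_eval {p : ℝ[X]} (hp : ∀ n, 0 ≤ p.coeff n) {x : ℝ}
    (hx : 0 ≤ x) (m : ℕ) : p.coeff m * x ^ m ≤ p.eval x := by
  rw [eval_eq_sum_range' (n := p.natDegree + m + 1) (by omega)]
  exact single_le_sum (fun i _ => mul_nonneg (hp i) (pow_nonneg hx i)) (mem_range.2 (by omega))

theorem Polynomial.coeff_sum_C_mul_X_pow_pow {R : Type*} [CommSemiring R] (s : Finset ℕ)
    (a : ℕ → R) (N m : ℕ) :
    ((∑ j ∈ s, C (a j) * X ^ j) ^ N).coeff m =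
      ∑ f ∈ (Fintype.piFinset fun _ : Fin N => s) with ∑ i, f i = m, ∏ i, a (f i) := by
  rw [← Fin.prod_const, prod_univ_sum, finsetSum_coeff, sum_filter]
  refine sum_congr rfl fun f _ => ?_
  rw [prod_mul_distrib, ← map_prod, prod_pow_eq_pow_sum, coeff_C_mul_X_pow]
  simp only [eq_comm]

noncomputable def truncExpPoly (α : ℕ) : ℝ[X] :=
  ∑ γ ∈ range α, C (1 / (γ.factorial : ℝ)) * X ^ γ

theorem eval_truncExpPoly (α : ℕ) (R : ℝ) : (truncExpPoly α).eval R = truncExp α R := by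
  simp [truncExpPoly, truncExp, eval_finsetSum, div_eq_inv_mul]

theorem coeff_truncExpPoly (α j : ℕ) :
    (truncExpPoly α).coeff j = if j < α then 1 / (j.factorial : ℝ) else 0 := by
  simp [truncExpPoly]

theorem coeff_truncExpPoly_pow (α N m : ℕ) :
    (truncExpPoly α ^ N).coeff m =
      ∑ f ∈ (Fintype.piFinset fun _ : Fin N => range α) with ∑ i, f i = m,
        ∏ i, 1 / ((f i).factorial : ℝ) :=
  coeff_sum_C_mul_X_pow_pow _ _ N m

theorem coeff_truncExpPoly_pow_nonneg (α N m : ℕ) : 0 ≤ (truncExpPoly α ^ N).coeff m := by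
  rw [coeff_truncExpPoly_pow]
  positivity

theorem natDegree_truncExpPoly_pow_le (α N : ℕ) :
    (truncExpPoly α ^ N).natDegree ≤ N * (α - 1) := by
  refine natDegree_pow_le.trans (Nat.mul_le_mul_left N ?_)
  refine natDegree_sum_le_of_forall_le _ _ fun γ hγ => ?_
  exact (natDegree_C_mul_X_pow_le _ _).trans (by rw [mem_range] at hγ; omega)

theorem rootedTrees_eq_coeff (α k : ℕ) :
    rootedTrees α (k + 2) = (truncExpPoly α ^ (k + 1)).coeff k / (k + 1) := by
  rw [coeff_truncExpPoly_pow]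
  show 1 / (((k + 2 : ℕ) : ℝ) - 1) * ∑ f ∈ (Fintype.piFinset fun _ : Fin (k + 1) => range α)
    with ∑ i, f i = k, ∏ i, 1 / ((f i).factorial : ℝ) = _
  push_cast
  ring

theorem isPF2_intCoeff_truncExpPoly (α : ℕ) : IsPF2 (truncExpPoly α).intCoeff := by
  intro x y hxy
  have hnn : ∀ n, 0 ≤ (truncExpPoly α).coeff n := by
    simpa using coeff_truncExpPoly_pow_nonneg α 1
  have rhs_nonneg := mul_nonneg (intCoeff_nonneg hnn (x + 1)) (intCoeff_nonneg hnn y)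
  rcases lt_or_ge x 0 with hx | hx
  · rwa [intCoeff_of_neg _ hx, zero_mul]
  lift x to ℕ using hx
  lift y to ℕ using (by omega)
  norm_cast at hxy rhs_nonneg ⊢
  simp only [intCoeff_natCast, coeff_truncExpPoly] at rhs_nonneg ⊢
  by_cases hyα : y + 1 < α
  · rw [if_pos (by omega), if_pos hyα, if_pos (by omega), if_pos (by omega), div_mul_div_comm,
      div_mul_div_comm, one_mul]
    refine one_div_le_one_div_of_le (by positivity : (0 : ℝ) < (x + 1).factorial * y.factorial) ?_
    norm_cast
    calc (x + 1).factorial * y.factorial = x.factorial * y.factorial * (x + 1) := by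
          rw [Nat.factorial_succ]; ring
      _ ≤ x.factorial * y.factorial * (y + 1) := by gcongr
      _ = x.factorial * (y + 1).factorial := by rw [Nat.factorial_succ]; ring
  · rwa [if_neg hyα, mul_zero]

theorem isPF2_intCoeff_truncExpPoly_pow (α N : ℕ) : IsPF2 (truncExpPoly α ^ N).intCoeff := by
  induction N with
  | zero => simpa [truncExpPoly] using isPF2_intCoeff_truncExpPoly 1
  | succ N ih => rw [pow_succ]; exact ih.intCoeff_mul (isPF2_intCoeff_truncExpPoly α)

theorem coeff_truncExpPoly_pow_le_succ {α : ℕ} (hα : 0 < α) (N m : ℕ) :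
    (truncExpPoly α ^ N).coeff m ≤ (truncExpPoly α ^ (N + 1)).coeff m := by
  rw [pow_succ, coeff_mul]
  have hmem : (m, 0) ∈ antidiagonal m := by simp
  have := single_le_sum (fun x _ => mul_nonneg (coeff_truncExpPoly_pow_nonneg α N x.1)
    (by simpa using coeff_truncExpPoly_pow_nonneg α 1 x.2)) hmem
  simpa [coeff_truncExpPoly, hα] using this

theorem mul_eval_derivative_truncExpPoly {α : ℕ} {R : ℝ} (hα : 1 ≤ α)
    (heq : (R - 1) * truncExp α R = R ^ α / (Nat.factorial (α - 1))) :
    R * (derivative (truncExpPoly α)).eval R = truncExp α R := by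
  obtain ⟨p, rfl⟩ : ∃ p, α = p + 1 := ⟨α - 1, by omega⟩
  have hdeg : (truncExpPoly (p + 1)).natDegree < p + 1 :=
    Nat.lt_succ_of_le (by simpa using natDegree_truncExpPoly_pow_le (p + 1) 1)
  rw [← sum_range_mul_coeff_mul_pow hdeg, sum_range_succ']
  have hg : truncExp (p + 1) R = truncExp p R + R ^ p / p.factorial := by
    rw [truncExp, sum_range_succ]; rfl
  rw [Nat.add_sub_cancel] at heq
  calc ∑ i ∈ range p, ((i + 1 : ℕ) : ℝ) * ((truncExpPoly (p + 1)).coeff (i + 1) * R ^ (i + 1))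
        + ((0 : ℕ) : ℝ) * ((truncExpPoly (p + 1)).coeff 0 * R ^ 0)
      = R * truncExp p R := by
        rw [truncExp, mul_sum, Nat.cast_zero, zero_mul, add_zero]
        refine sum_congr rfl fun i hi => ?_
        rw [coeff_truncExpPoly, if_pos (by simp at hi; omega), Nat.factorial_succ]
        push_cast
        field_simp
        ring
    _ = truncExp (p + 1) R := by
        rw [hg] at heq ⊢
        field_simp at heq ⊢
        linear_combination heq

theorem exists_le_sq_mul_of_sum_mul_le {t : ℕ → ℝ} {N M : ℕ} {G : ℝ} (ht : ∀ m, 0 ≤ t m)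
    (hNM : N ≤ M) (hsum : ∑ m ∈ range (M + 1), t m = G)
    (hmean : ∑ m ∈ range (M + 1), (m : ℝ) * t m ≤ N * G) :
    ∃ a ≤ N, G ≤ ((N : ℝ) + 1) ^ 2 * t a := by
  have split := sum_range_add_sum_Ico t (Nat.succ_le_succ hNM)
  have split' := sum_range_add_sum_Ico (fun m => (m : ℝ) * t m) (Nat.succ_le_succ hNM)
  have head : 0 ≤ ∑ m ∈ range (N + 1), (m : ℝ) * t m :=
    sum_nonneg fun m _ => mul_nonneg m.cast_nonneg (ht m)
  have tail : ((N : ℝ) + 1) * ∑ m ∈ Ico (N + 1) (M + 1), t m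
      ≤ ∑ m ∈ Ico (N + 1) (M + 1), (m : ℝ) * t m := by
    rw [mul_sum]
    refine sum_le_sum fun m hm => mul_le_mul_of_nonneg_right ?_ (ht m)
    exact_mod_cast (mem_Ico.1 hm).1
  have hL : G ≤ ((N : ℝ) + 1) * ∑ m ∈ range (N + 1), t m := by
    rw [← hsum, ← split] at hmean ⊢
    rw [← split'] at hmean
    nlinarith
  obtain ⟨a, ha, hle⟩ := exists_le_of_sum_le (f := fun _ => G)
    (g := fun a => ((N : ℝ) + 1) ^ 2 * t a) nonempty_range_add_one (by
      rw [sum_const, card_range, nsmul_eq_mul, ← mul_sum]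
      push_cast
      nlinarith)
  exact ⟨a, Nat.lt_succ_iff.1 (mem_range.1 ha), hle⟩

theorem exists_le_sq_mul_of_le_sum_mul {t : ℕ → ℝ} {N M : ℕ} {G : ℝ} (ht : ∀ m, 0 ≤ t m)
    (hNM : N ≤ M) (hsum : ∑ m ∈ range (M + 1), t m = G)
    (hmean : N * G ≤ ∑ m ∈ range (M + 1), (m : ℝ) * t m) :
    ∃ b, N ≤ b ∧ b ≤ M ∧ G ≤ ((M : ℝ) + 1 - N) ^ 2 * t b := by
  have split := sum_range_add_sum_Ico t (hNM.trans M.le_succ)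
  have split' := sum_range_add_sum_Ico (fun m => (m : ℝ) * t m) (hNM.trans M.le_succ)
  have head : ∑ m ∈ range N, (m : ℝ) * t m ≤ ((N : ℝ) - 1) * ∑ m ∈ range N, t m := by
    rw [mul_sum]
    refine sum_le_sum fun m hm => mul_le_mul_of_nonneg_right ?_ (ht m)
    have : m + 1 ≤ N := mem_range.1 hm
    have : (m : ℝ) + 1 ≤ N := by exact_mod_cast this
    linarith
  have tail : ∑ m ∈ Ico N (M + 1), (m : ℝ) * t m ≤ (M : ℝ) * ∑ m ∈ Ico N (M + 1), t m := by
    rw [mul_sum]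
    refine sum_le_sum fun m hm => mul_le_mul_of_nonneg_right ?_ (ht m)
    exact_mod_cast Nat.lt_succ_iff.1 (mem_Ico.1 hm).2
  have hU : G ≤ ((M : ℝ) + 1 - N) * ∑ m ∈ Ico N (M + 1), t m := by
    rw [← hsum, ← split] at hmean ⊢
    rw [← split'] at hmean
    nlinarith
  have hcard : ((#(Ico N (M + 1)) : ℕ) : ℝ) = (M : ℝ) + 1 - N := by
    rw [Nat.card_Ico, Nat.cast_sub (by omega)]
    push_cast
    ring
  obtain ⟨b, hb, hle⟩ := exists_le_of_sum_le (f := fun _ => G)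
    (g := fun b => ((M : ℝ) + 1 - N) ^ 2 * t b) (nonempty_Ico.2 (Nat.lt_succ_of_le hNM)) (by
      rw [sum_const, nsmul_eq_mul, hcard, ← mul_sum]
      have : (0 : ℝ) ≤ (M : ℝ) + 1 - N := by
        have : (N : ℝ) ≤ M := by exact_mod_cast hNM
        linarith
      nlinarith)
  obtain ⟨hNb, hbM⟩ := mem_Ico.1 hb
  exact ⟨b, hNb, Nat.lt_succ_iff.1 hbM, hle⟩

theorem le_pow_four_mul_of_sum_mul_eq {t : ℕ → ℝ} {N M : ℕ} {G : ℝ} (ht : ∀ m, 0 ≤ t m)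
    (hNM : N ≤ M) (hG : 0 < G)
    (hexch : ∀ a b, a ≤ N → N ≤ b → b ≤ M → t a * t b ≤ t N * t (a + b - N))
    (hsum : ∑ m ∈ range (M + 1), t m = G)
    (hmean : ∑ m ∈ range (M + 1), (m : ℝ) * t m = N * G) :
    G ≤ ((M : ℝ) + 1) ^ 4 * t N := by
  obtain ⟨a, haN, ha⟩ := exists_le_sq_mul_of_sum_mul_le ht hNM hsum hmean.le
  obtain ⟨b, hNb, hbM, hb⟩ := exists_le_sq_mul_of_le_sum_mul ht hNM hsum hmean.ge
  have htop : t (a + b - N) ≤ G :=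
    hsum ▸ single_le_sum (fun m _ => ht m) (mem_range.2 (by omega))
  have hN : (N : ℝ) ≤ M := by exact_mod_cast hNM
  refine le_of_mul_le_mul_right ?_ hG
  calc G * G ≤ (((N : ℝ) + 1) ^ 2 * t a) * (((M : ℝ) + 1 - N) ^ 2 * t b) :=
        mul_le_mul ha hb hG.le (by have := ht a; positivity)
    _ ≤ (((M : ℝ) + 1) ^ 2 * t a) * (((M : ℝ) + 1) ^ 2 * t b) := by
        have := ht a; have := ht b
        gcongr <;> linarith
    _ = ((M : ℝ) + 1) ^ 4 * (t a * t b) := by ring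
    _ ≤ ((M : ℝ) + 1) ^ 4 * (t N * G) := mul_le_mul_of_nonneg_left
        ((hexch a b haN hNb hbM).trans (mul_le_mul_of_nonneg_left htop (ht N))) (by positivity)
    _ = ((M : ℝ) + 1) ^ 4 * t N * G := by ring

theorem truncExp_pos {α : ℕ} (hα : 0 < α) {R : ℝ} (hR : 0 ≤ R) : 0 < truncExp α R :=
  sum_pos' (fun γ _ => by positivity) ⟨0, mem_range.2 hα, by simp⟩

theorem truncExp_pow_le_coeff_truncExpPoly_pow {α : ℕ} {R : ℝ} (hα : 2 ≤ α) (hR : 0 < R)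
    (heq : (R - 1) * truncExp α R = R ^ α / (Nat.factorial (α - 1))) (N : ℕ) :
    truncExp α R ^ N ≤
      (((N * (α - 1) : ℕ) : ℝ) + 1) ^ 4 * ((truncExpPoly α ^ N).coeff N * R ^ N) := by
  have hdeg : (truncExpPoly α ^ N).natDegree < N * (α - 1) + 1 :=
    Nat.lt_succ_of_le (natDegree_truncExpPoly_pow_le α N)
  refine le_pow_four_mul_of_sum_mul_eq (t := fun m => (truncExpPoly α ^ N).coeff m * R ^ m)
    (fun m => mul_nonneg (coeff_truncExpPoly_pow_nonneg α N m) (by positivity))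
    (Nat.le_mul_of_pos_right N (by omega)) (pow_pos (truncExp_pos (by omega) hR.le) N)
    (fun a b haN hNb _ => ?_) ?_ ?_
  · have hpf := (isPF2_intCoeff_truncExpPoly_pow α N).mul_le_mul
      (i := a) (j := N) (k := (b : ℤ) - N) (by omega) (by omega)
    rw [show (N : ℤ) + (b - N) = (b : ℕ) by ring,
      show (a : ℤ) + (b - N) = (a + b - N : ℕ) by omega] at hpf
    simp only [intCoeff_natCast] at hpf
    calc (truncExpPoly α ^ N).coeff a * R ^ a * ((truncExpPoly α ^ N).coeff b * R ^ b)
        = (truncExpPoly α ^ N).coeff a * (truncExpPoly α ^ N).coeff b * R ^ (a + b) := by ring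
      _ ≤ (truncExpPoly α ^ N).coeff N * (truncExpPoly α ^ N).coeff (a + b - N) * R ^ (a + b) :=
        by gcongr
      _ = (truncExpPoly α ^ N).coeff N * R ^ N *
            ((truncExpPoly α ^ N).coeff (a + b - N) * R ^ (a + b - N)) := by
        rw [mul_mul_mul_comm, ← pow_add, Nat.add_sub_cancel' (by omega : N ≤ a + b)]
  · rw [← eval_eq_sum_range' hdeg, eval_pow, eval_truncExpPoly]
  · rw [sum_range_mul_coeff_mul_pow hdeg, derivative_pow, eval_mul, eval_mul, eval_C, eval_pow,
      eval_truncExpPoly]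
    rcases N with _ | N
    · simp
    · rw [mul_left_comm, mul_assoc, mul_eval_derivative_truncExpPoly (by omega) heq,
        Nat.add_sub_cancel]
      ring

theorem abs_rootedTrees_mul_pow (α k : ℕ) (x : ℝ) :
    |rootedTrees α (k + 2) * x ^ (k + 1)| =
      (truncExpPoly α ^ (k + 1)).coeff k * |x| ^ (k + 1) / (k + 1) := by
  rw [abs_mul, abs_pow, rootedTrees_eq_coeff,
    abs_of_nonneg (div_nonneg (coeff_truncExpPoly_pow_nonneg _ _ _) (by positivity))]
  ring

theorem summable_rootedTrees_mul_pow {α : ℕ} {R x : ℝ} (hR : 0 < R)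
    (hx : |x| < R / truncExp α R) :
    Summable fun k : ℕ => rootedTrees α (k + 2) * x ^ (k + 1) := by
  set g := truncExp α R
  have hg : 0 < g := (div_pos_iff_of_pos_left hR).1 ((abs_nonneg x).trans_lt hx)
  set q := g * |x| / R
  have hq : q < 1 := by
    rw [div_lt_one hR]
    rwa [lt_div_iff₀ hg, mul_comm] at hx
  refine Summable.of_norm_bounded
    ((summable_geometric_of_lt_one (by positivity) hq).mul_left (R * q)) fun k => ?_
  have hc := coeff_mul_pow_le_eval (coeff_truncExpPoly_pow_nonneg α (k + 1)) hR.le k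
  rw [eval_pow, eval_truncExpPoly] at hc
  rw [Real.norm_eq_abs, abs_rootedTrees_mul_pow]
  calc (truncExpPoly α ^ (k + 1)).coeff k * |x| ^ (k + 1) / (k + 1)
      ≤ (truncExpPoly α ^ (k + 1)).coeff k * |x| ^ (k + 1) :=
        div_le_self (by have := coeff_truncExpPoly_pow_nonneg α (k + 1) k; positivity)
          (by linarith [k.cast_nonneg (α := ℝ)])
    _ ≤ g ^ (k + 1) / R ^ k * |x| ^ (k + 1) := by
        gcongr
        rwa [le_div_iff₀ (by positivity)]
    _ = R * q * q ^ k := by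
        simp only [q, div_pow, mul_pow]
        field_simp
        ring

theorem not_summable_rootedTrees_mul_pow {α : ℕ} {R x : ℝ} (hα : 2 ≤ α) (hR : 0 < R)
    (heq : (R - 1) * truncExp α R = R ^ α / (Nat.factorial (α - 1)))
    (hx : R / truncExp α R < |x|) :
    ¬ Summable fun k : ℕ => rootedTrees α (k + 2) * x ^ (k + 1) := by
  intro hsum
  set g := truncExp α R
  have hg : 0 < g := truncExp_pos (by omega) hR.le
  have hx0 : 0 < |x| := (div_pos hR hg).trans hx
  set q := g * |x| / R
  have hq : 1 < q := by
    rw [one_lt_div hR]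
    rwa [div_lt_iff₀ hg, mul_comm] at hx
  have lower : ∀ k : ℕ, R / (g * α ^ 4) ≤
      ((k + 1 : ℕ) : ℝ) ^ 5 / q ^ (k + 1) * |rootedTrees α (k + 2) * x ^ (k + 1)| := by
    intro k
    set c := (truncExpPoly α ^ (k + 1)).coeff k
    have hdeg : ((k * (α - 1) : ℕ) : ℝ) + 1 ≤ α * (k + 1) := by
      have : k * (α - 1) + 1 ≤ α * (k + 1) := by
        have := Nat.mul_le_mul_left k (Nat.sub_le α 1); nlinarith
      exact_mod_cast this
    have hgk : g ^ k ≤ (α * (k + 1)) ^ 4 * (c * R ^ k) :=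
      (truncExp_pow_le_coeff_truncExpPoly_pow hα hR heq k).trans (by
        have := coeff_truncExpPoly_pow_nonneg α k k
        gcongr
        exact coeff_truncExpPoly_pow_le_succ (by omega) k k)
    rw [abs_rootedTrees_mul_pow]
    calc R / (g * α ^ 4) = R * g ^ k / (g ^ (k + 1) * α ^ 4) := by
          field_simp
          ring
      _ ≤ R * ((α * (k + 1)) ^ 4 * (c * R ^ k)) / (g ^ (k + 1) * α ^ 4) := by gcongr
      _ = _ := by
          simp only [q, div_pow, mul_pow]
          push_cast
          field_simp
          ring
  have htend : Filter.Tendsto (fun k : ℕ => ((k + 1 : ℕ) : ℝ) ^ 5 / q ^ (k + 1) *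
      |rootedTrees α (k + 2) * x ^ (k + 1)|) Filter.atTop (nhds 0) := by
    simpa using ((tendsto_pow_const_div_const_pow_of_one_lt 5 hq).comp
      (Filter.tendsto_add_atTop_nat 1)).mul hsum.abs.tendsto_atTop_zero
  exact (ge_of_tendsto' htend lower).not_gt (by positivity)

theorem branched_polymer_radius_of_convergence_general (α : ℕ) (hα : 3 ≤ α)
    (Rc : ℝ) (hRc : 0 < Rc)
    (heq : (Rc - 1) * truncExp α Rc = Rc ^ α / (Nat.factorial (α - 1))) :
    (∀ x : ℝ, |x| < Rc / truncExp α Rc →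
        Summable (fun k : ℕ => rootedTrees α (k + 2) * x ^ (k + 1))) ∧
    (∀ x : ℝ, Rc / truncExp α Rc < |x| →
        ¬ Summable (fun k : ℕ => rootedTrees α (k + 2) * x ^ (k + 1))) :=
  ⟨fun _ hx => summable_rootedTrees_mul_pow hRc hx,
    fun _ hx => not_summable_rootedTrees_mul_pow (by omega) hRc heq hx⟩

/-- **The critical fugacity is the radius of convergence.**
Let `α ≥ 3`, `R_c` the unique positive solution of
`(R − 1)·g_α(R) = R^α/(α−1)!`, and `β_c = R_c/g_α(R_c)`.  Then the power
series `Σ_{n≥2} r_α(n)·x^{n−1}` converges for `|x| < β_c` and diverges for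
`|x| > β_c`: its radius of convergence is exactly `β_c`. -/
theorem branched_polymer_radius_of_convergence (α : ℕ) (hα : 3 ≤ α)
    (Rc : ℝ) (hRc : 0 < Rc)
    (heq : (Rc - 1) * truncExp α Rc = Rc ^ α / (Nat.factorial (α - 1)))
    (huniq : ∀ R : ℝ, 0 < R →
        (R - 1) * truncExp α R = R ^ α / (Nat.factorial (α - 1)) → R = Rc) :
    (∀ x : ℝ, |x| < Rc / truncExp α Rc →
        Summable (fun k : ℕ => rootedTrees α (k + 2) * x ^ (k + 1))) ∧
    (∀ x : ℝ, Rc / truncExp α Rc < |x| →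
        ¬ Summable (fun k : ℕ => rootedTrees α (k + 2) * x ^ (k + 1))) :=
  branched_polymer_radius_of_convergence_general α hα Rc hRc heq
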